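/- Let n = 2m and let f : F_{2^n} → F_2 be bent with dual f*. Suppose there exist nonzero elements μ_1, …, μ_r ∈ F_{2^n} and Boolean functions g_1, …, g_r : F_{2^n} → F_2 such that f*(x + ∑_{i=1}^r ω_i μ_i) = f*(x) + ∑_{i=1}^r ω_i g_i(x) for all x ∈ F_{2^n} and all (ω_1,…,ω_r) ∈ F_2^r (where ω_i μ_i means μ_i if ω_i = 1 and 0 if ω_i = 0). Then for every Boolean function F : F_2^r → F_2, the function h(x) = f(x) + F(Tr(μ_1 x), Tr(μ_2 x), …, Tr(μ_r x)) is bent, with dual h*(x) = f*(x) + F(g_1(x), g_2(x), …, g_r(x)). -/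
import Mathlib

noncomputable section
set_option maxHeartbeats 1000000

noncomputable instance (n : ℕ) : Fintype (GaloisField 2 n) := Fintype.ofFinite _

/-- `(-1)^c` for `c ∈ F_2`. -/
def sgn (c : ZMod 2) : ℤ := if c = 0 then 1 else -1

/-- The absolute trace `Tr : F_{2^n} → F_2`. -/
def Tr {n : ℕ} (x : GaloisField 2 n) : ZMod 2 :=
  Algebra.trace (ZMod 2) (GaloisField 2 n) x

/-- Walsh–Hadamard transform of a Boolean function on `F_{2^n}`. -/
def walsh {n : ℕ} (f : GaloisField 2 n → ZMod 2) (μ : GaloisField 2 n) : ℤ :=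
  ∑ x : GaloisField 2 n, sgn (f x + Tr (μ * x))

/-- `f` is bent (where `n = 2m`): all Walsh coefficients are `±2^m`. -/
def IsBent {n : ℕ} (m : ℕ) (f : GaloisField 2 n → ZMod 2) : Prop :=
  ∀ μ, walsh f μ = 2 ^ m ∨ walsh f μ = -(2 ^ m)

/-- `fs` is the dual of the bent function `f` (where `n = 2m`). -/
def IsDualOf {n : ℕ} (m : ℕ) (fs f : GaloisField 2 n → ZMod 2) : Prop :=
  ∀ μ, walsh f μ = 2 ^ m * sgn (fs μ)

lemma sgn_add (a b : ZMod 2) : sgn (a + b) = sgn a * sgn b := by revert a b; decide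

lemma sgn_cases (a : ZMod 2) : sgn a = 1 ∨ sgn a = -1 := by revert a; decide

lemma sgn_sum {ι : Type*} (s : Finset ι) (c : ι → ZMod 2) :
    sgn (∑ i ∈ s, c i) = ∏ i ∈ s, sgn (c i) := by
  induction s using Finset.cons_induction with
  | empty => simp [sgn]
  | cons a s ha ih => rw [Finset.sum_cons, Finset.prod_cons, sgn_add, ih]

lemma sum_sgn_mul (x : ZMod 2) : ∑ a : ZMod 2, sgn (a * x) = if x = 0 then 2 else 0 := by
  revert x; decide

lemma orth {r : ℕ} (v : Fin r → ZMod 2) :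
    ∑ ω : Fin r → ZMod 2, sgn (∑ i, ω i * v i) = if v = 0 then 2 ^ r else 0 := by
  calc ∑ ω : Fin r → ZMod 2, sgn (∑ i, ω i * v i)
      = ∑ ω : Fin r → ZMod 2, ∏ i, sgn (ω i * v i) := by
        simp only [sgn_sum]
    _ = ∑ ω ∈ Fintype.piFinset (fun _ : Fin r => (Finset.univ : Finset (ZMod 2))),
          ∏ i, sgn (ω i * v i) := by rw [Fintype.piFinset_univ]
    _ = ∏ i, ∑ a : ZMod 2, sgn (a * v i) :=
        (Finset.prod_univ_sum (fun _ : Fin r => (Finset.univ : Finset (ZMod 2)))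
          (fun i a => sgn (a * v i))).symm
    _ = ∏ i : Fin r, if v i = 0 then (2:ℤ) else 0 := by simp only [sum_sgn_mul]
    _ = if v = 0 then 2 ^ r else 0 := by
        by_cases hv : v = 0
        · simp [hv]
        · rw [if_neg hv]
          obtain ⟨i, hi⟩ := Function.ne_iff.mp hv
          exact Finset.prod_eq_zero (Finset.mem_univ i) (if_neg hi)

lemma inv_walsh {r : ℕ} (F : (Fin r → ZMod 2) → ZMod 2) (y : Fin r → ZMod 2) :
    ∑ ω : Fin r → ZMod 2,
      (∑ u : Fin r → ZMod 2, sgn (F u + ∑ i, ω i * u i)) * sgn (∑ i, ω i * y i)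
    = 2 ^ r * sgn (F y) := by
  have hadd : ∀ a b : ZMod 2, a + b = 0 → a = b := by decide
  calc ∑ ω : Fin r → ZMod 2,
        (∑ u : Fin r → ZMod 2, sgn (F u + ∑ i, ω i * u i)) * sgn (∑ i, ω i * y i)
      = ∑ u : Fin r → ZMod 2, sgn (F u) * ∑ ω : Fin r → ZMod 2, sgn (∑ i, ω i * (u + y) i) := by
        simp only [Finset.sum_mul]
        rw [Finset.sum_comm]
        refine Finset.sum_congr rfl fun u _ => ?_
        rw [Finset.mul_sum]
        refine Finset.sum_congr rfl fun ω _ => ?_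
        rw [sgn_add, mul_assoc, ← sgn_add, ← Finset.sum_add_distrib]
        congr 2
        refine Finset.sum_congr rfl fun i _ => ?_
        simp [Pi.add_apply, mul_add]
    _ = ∑ u : Fin r → ZMod 2, sgn (F u) * (if u + y = 0 then (2:ℤ) ^ r else 0) := by
        simp only [orth]
    _ = ∑ u : Fin r → ZMod 2, (if u = y then sgn (F y) * 2 ^ r else 0) := by
        refine Finset.sum_congr rfl fun u _ => ?_
        by_cases hu : u = y
        · subst hu
          have h0 : u + u = 0 := by funext i; exact CharTwo.add_self_eq_zero _
          simp [h0, mul_comm]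
        · have h0 : u + y ≠ 0 := fun h => hu (funext fun i => hadd _ _ (congrFun h i))
          simp [h0, hu]
    _ = sgn (F y) * 2 ^ r := by rw [Finset.sum_ite_eq' Finset.univ y]; simp
    _ = 2 ^ r * sgn (F y) := mul_comm _ _

lemma Tr_add {n : ℕ} (a b : GaloisField 2 n) : Tr (a + b) = Tr a + Tr b := by
  simp [Tr, map_add]

lemma Tr_sum_combo {n r : ℕ} (μ : Fin r → GaloisField 2 n) (ω : Fin r → ZMod 2)
    (x : GaloisField 2 n) :
    Tr ((∑ i, if ω i = 1 then μ i else 0) * x) = ∑ i, ω i * Tr (μ i * x) := by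
  rw [Finset.sum_mul]
  rw [show Tr (∑ i, (if ω i = 1 then μ i else 0) * x)
      = ∑ i, Tr ((if ω i = 1 then μ i else 0) * x) from map_sum _ _ _]
  refine Finset.sum_congr rfl fun i _ => ?_
  have : ω i = 0 ∨ ω i = 1 := by revert ω; intro ω; exact (by decide : ∀ a : ZMod 2, a = 0 ∨ a = 1) (ω i)
  rcases this with h | h <;> simp [h, Tr]

/-- Tang et al.: if `f*(x + ∑ ω_i μ_i) = f*(x) + ∑ ω_i g_i(x)` for all `x` and `ω`, then for
every `F`, `h(x) = f(x) + F(Tr(μ_1 x), …, Tr(μ_r x))` is bent with dual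
`f*(x) + F(g_1(x), …, g_r(x))`. -/
theorem statement3 {n m r : ℕ} (hn : n = 2 * m)
    (f fs : GaloisField 2 n → ZMod 2) (hf : IsBent m f) (hfd : IsDualOf m fs f)
    (μ : Fin r → GaloisField 2 n) (hμ : ∀ i, μ i ≠ 0)
    (g : Fin r → (GaloisField 2 n → ZMod 2))
    (hcond : ∀ (x : GaloisField 2 n) (ω : Fin r → ZMod 2),
      fs (x + ∑ i, if ω i = 1 then μ i else 0) = fs x + ∑ i, ω i * g i x)
    (F : (Fin r → ZMod 2) → ZMod 2) :
    IsBent m (fun x => f x + F (fun i => Tr (μ i * x))) ∧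
      IsDualOf m (fun x => fs x + F (fun i => g i x))
        (fun x => f x + F (fun i => Tr (μ i * x))) := by
  have key : IsDualOf m (fun x => fs x + F (fun i => g i x))
      (fun x => f x + F (fun i => Tr (μ i * x))) := by
    intro lam
    have h2r : ((2:ℤ) ^ r) ≠ 0 := pow_ne_zero _ two_ne_zero
    apply mul_left_cancel₀ h2r
    set WF : (Fin r → ZMod 2) → ℤ :=
      fun ω => ∑ u : Fin r → ZMod 2, sgn (F u + ∑ i, ω i * u i) with hWF
    calc (2:ℤ) ^ r * walsh (fun x => f x + F (fun i => Tr (μ i * x))) lam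
        = ∑ x : GaloisField 2 n,
            sgn (f x + Tr (lam * x)) * ((2:ℤ) ^ r * sgn (F (fun i => Tr (μ i * x)))) := by
          rw [walsh, Finset.mul_sum]
          refine Finset.sum_congr rfl fun x _ => ?_
          have hc : (f x + F (fun i => Tr (μ i * x))) + Tr (lam * x)
              = (f x + Tr (lam * x)) + F (fun i => Tr (μ i * x)) := by ring
          rw [hc, sgn_add]; ring
      _ = ∑ x : GaloisField 2 n, sgn (f x + Tr (lam * x)) *
            ∑ ω : Fin r → ZMod 2, WF ω * sgn (∑ i, ω i * Tr (μ i * x)) := by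
          refine Finset.sum_congr rfl fun x _ => ?_
          rw [inv_walsh F (fun i => Tr (μ i * x))]
      _ = ∑ ω : Fin r → ZMod 2, WF ω *
            ∑ x : GaloisField 2 n, sgn (f x + Tr (lam * x)) * sgn (∑ i, ω i * Tr (μ i * x)) := by
          simp only [Finset.mul_sum]
          rw [Finset.sum_comm]
          refine Finset.sum_congr rfl fun ω _ => Finset.sum_congr rfl fun x _ => by ring
      _ = ∑ ω : Fin r → ZMod 2, WF ω * walsh f (lam + ∑ i, if ω i = 1 then μ i else 0) := by
          refine Finset.sum_congr rfl fun ω _ => ?_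
          congr 1
          rw [walsh]
          refine Finset.sum_congr rfl fun x _ => ?_
          rw [← sgn_add]
          congr 1
          rw [add_mul, Tr_add, Tr_sum_combo, add_assoc]
      _ = ∑ ω : Fin r → ZMod 2, WF ω *
            ((2:ℤ) ^ m * (sgn (fs lam) * sgn (∑ i, ω i * g i lam))) := by
          refine Finset.sum_congr rfl fun ω _ => ?_
          rw [hfd, hcond lam ω, sgn_add]
      _ = (2:ℤ) ^ m * sgn (fs lam) *
            ∑ ω : Fin r → ZMod 2, WF ω * sgn (∑ i, ω i * g i lam) := by
          rw [Finset.mul_sum]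
          refine Finset.sum_congr rfl fun ω _ => by ring
      _ = (2:ℤ) ^ m * sgn (fs lam) * ((2:ℤ) ^ r * sgn (F (fun i => g i lam))) := by
          rw [inv_walsh F (fun i => g i lam)]
      _ = (2:ℤ) ^ r * ((2:ℤ) ^ m * sgn (fs lam + F (fun i => g i lam))) := by
          rw [sgn_add]; ring
  refine ⟨fun lam => ?_, key⟩
  rw [key lam]
  rcases sgn_cases (fs lam + F (fun i => g i lam)) with h | h <;> rw [h]
  · left; ring
  · right; ring
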